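/- If a bivariate polynomial φ of degree at most 5 vanishes together with its gradient on three pairwise non-parallel distinct lines in R^2, and L is any line passing through three distinct points of the union of those three lines, then φ vanishes on L. -/
import Mathlib


/-- Evaluation of a bivariate polynomial at a point of `ℝ × ℝ`. -/
noncomputable def evP (q : MvPolynomial (Fin 2) ℝ) (p : ℝ × ℝ) : ℝ :=
  MvPolynomial.eval ![p.1, p.2] q

/-- The line {(x,y) : a·x + b·y = c} in ℝ². -/
def lineEq (a b c : ℝ) : Set (ℝ × ℝ) := {p | a * p.1 + b * p.2 = c}

lemma chainrule (g : Fin 2 → Polynomial ℝ) (q : MvPolynomial (Fin 2) ℝ) :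
    Polynomial.derivative (MvPolynomial.aeval g q) =
      MvPolynomial.aeval g (MvPolynomial.pderiv 0 q) * Polynomial.derivative (g 0)
      + MvPolynomial.aeval g (MvPolynomial.pderiv 1 q) * Polynomial.derivative (g 1) := by
  induction q using MvPolynomial.induction_on with
  | C r => simp
  | add p q hp hq => simp only [map_add, Polynomial.derivative_add, hp, hq]; ring
  | mul_X p i hp =>
    rw [map_mul, MvPolynomial.aeval_X, Polynomial.derivative_mul, hp]
    fin_cases i <;>
      simp [MvPolynomial.pderiv_mul, MvPolynomial.pderiv_X, Pi.single_apply] <;> ring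

lemma deg_le (g : Fin 2 → Polynomial ℝ) (hg : ∀ i, (g i).natDegree ≤ 1)
    (q : MvPolynomial (Fin 2) ℝ) :
    (MvPolynomial.aeval g q).natDegree ≤ q.totalDegree := by
  rw [MvPolynomial.aeval_def, MvPolynomial.eval₂_eq]
  refine Polynomial.natDegree_sum_le_of_forall_le _ _ fun m hm => ?_
  refine Polynomial.natDegree_mul_le.trans ?_
  have h1 : (algebraMap ℝ (Polynomial ℝ) (q.coeff m)).natDegree = 0 := by
    simp [Polynomial.algebraMap_apply]
  rw [h1, zero_add]
  refine (Polynomial.natDegree_prod_le _ _).trans ?_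
  refine le_trans ?_ (MvPolynomial.le_totalDegree hm)
  rw [Finsupp.sum]
  exact Finset.sum_le_sum fun i _ =>
    (Polynomial.natDegree_pow_le).trans (by nlinarith [hg i, Nat.zero_le (m i)])

lemma evalcomp (g : Fin 2 → Polynomial ℝ) (q : MvPolynomial (Fin 2) ℝ) (t : ℝ) :
    Polynomial.eval t (MvPolynomial.aeval g q)
      = MvPolynomial.eval (fun i => Polynomial.eval t (g i)) q := by
  have h1 : (MvPolynomial.eval fun i => Polynomial.eval t (g i)) q
      = MvPolynomial.aeval (fun i => Polynomial.eval t (g i)) q := by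
    rw [← MvPolynomial.coe_aeval_eq_eval]; rfl
  rw [h1, ← Polynomial.coe_aeval_eq_eval,
    MvPolynomial.comp_aeval_apply (R := ℝ) (f := g) (Polynomial.aeval t) q]

lemma evalcomp' (q : MvPolynomial (Fin 2) ℝ) (x y u v t : ℝ) :
    Polynomial.eval t (MvPolynomial.aeval
      ![Polynomial.C x + Polynomial.C u * Polynomial.X,
        Polynomial.C y + Polynomial.C v * Polynomial.X] q)
      = evP q (x + u * t, y + v * t) := by
  rw [evalcomp]
  unfold evP
  have : (fun i => Polynomial.eval t
        (![Polynomial.C x + Polynomial.C u * Polynomial.X,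
           Polynomial.C y + Polynomial.C v * Polynomial.X] i))
      = ![(x + u * t, y + v * t).1, (x + u * t, y + v * t).2] := by
    funext i; fin_cases i <;> simp
  rw [this]

/-- If a degree-≤5 polynomial vanishes together with its gradient on three pairwise
    non-parallel lines, and L is a line passing through three distinct points of the
    union of those lines, then the polynomial vanishes on L. -/
theorem stmt4 (a b c : Fin 3 → ℝ) (hline : ∀ i, (a i, b i) ≠ (0, 0))
    (hnonpar : ∀ i j, i ≠ j → a i * b j - a j * b i ≠ 0)
    (φ : MvPolynomial (Fin 2) ℝ) (hdeg : φ.totalDegree ≤ 5)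
    (hvan : ∀ p ∈ lineEq (a 0) (b 0) (c 0) ∪ lineEq (a 1) (b 1) (c 1) ∪
        lineEq (a 2) (b 2) (c 2),
      evP φ p = 0 ∧ evP (MvPolynomial.pderiv 0 φ) p = 0 ∧
        evP (MvPolynomial.pderiv 1 φ) p = 0)
    (aL bL cL : ℝ) (hL : (aL, bL) ≠ (0, 0))
    (p1 p2 p3 : ℝ × ℝ) (h12 : p1 ≠ p2) (h13 : p1 ≠ p3) (h23 : p2 ≠ p3)
    (hp : ∀ p ∈ ({p1, p2, p3} : Set (ℝ × ℝ)),
      p ∈ lineEq aL bL cL ∧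
      p ∈ lineEq (a 0) (b 0) (c 0) ∪ lineEq (a 1) (b 1) (c 1) ∪
        lineEq (a 2) (b 2) (c 2)) :
    ∀ p ∈ lineEq aL bL cL, evP φ p = 0 := by
  classical
  have hp1L : aL * p1.1 + bL * p1.2 = cL := (hp p1 (by simp)).1
  have hp2L : aL * p2.1 + bL * p2.2 = cL := (hp p2 (by simp)).1
  have hp3L : aL * p3.1 + bL * p3.2 = cL := (hp p3 (by simp)).1
  have hs : aL ^ 2 + bL ^ 2 ≠ 0 := by
    intro h
    apply hL
    have ha : aL = 0 := by nlinarith [sq_nonneg aL, sq_nonneg bL]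
    have hb : bL = 0 := by nlinarith [sq_nonneg aL, sq_nonneg bL]
    simp [ha, hb]
  set τ : ℝ × ℝ → ℝ :=
    fun q => (aL * (q.2 - p1.2) - bL * (q.1 - p1.1)) / (aL ^ 2 + bL ^ 2) with hτ
  have hparam : ∀ q : ℝ × ℝ, aL * q.1 + bL * q.2 = cL →
      q = (p1.1 + (-bL) * τ q, p1.2 + aL * τ q) := by
    intro q hq
    have h1 : q.1 = p1.1 + (-bL) * τ q := by
      rw [hτ]; field_simp; linear_combination aL * hq - aL * hp1L
    have h2 : q.2 = p1.2 + aL * τ q := by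
      rw [hτ]; field_simp; linear_combination bL * hq - bL * hp1L
    exact Prod.ext h1 h2
  set g : Fin 2 → Polynomial ℝ :=
    ![Polynomial.C p1.1 + Polynomial.C (-bL) * Polynomial.X,
      Polynomial.C p1.2 + Polynomial.C aL * Polynomial.X] with hg
  set f : Polynomial ℝ := MvPolynomial.aeval g φ with hf
  have hfeval : ∀ t, f.eval t = evP φ (p1.1 + (-bL) * t, p1.2 + aL * t) := by
    intro t; rw [hf, hg]; exact evalcomp' φ _ _ _ _ t
  have haux : ∀ x u : ℝ, (Polynomial.C x + Polynomial.C u * Polynomial.X).natDegree ≤ 1 := by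
    intro x u
    refine (Polynomial.natDegree_add_le _ _).trans (max_le (by simp) ?_)
    exact (Polynomial.natDegree_mul_le).trans (by simp)
  have hgdeg : ∀ i, (g i).natDegree ≤ 1 := by
    intro i; fin_cases i
    · simpa [hg] using haux p1.1 (-bL)
    · simpa [hg] using haux p1.2 aL
  have hfdeg : f.natDegree ≤ 5 := le_trans (deg_le g hgdeg φ) hdeg
  have hgder0 : Polynomial.derivative (g 0) = Polynomial.C (-bL) := by
    rw [hg]; simp
  have hgder1 : Polynomial.derivative (g 1) = Polynomial.C aL := by
    rw [hg]; simp
  have hder : ∀ t, f.derivative.eval t =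
      evP (MvPolynomial.pderiv 0 φ) (p1.1 + (-bL) * t, p1.2 + aL * t) * (-bL)
      + evP (MvPolynomial.pderiv 1 φ) (p1.1 + (-bL) * t, p1.2 + aL * t) * aL := by
    intro t
    rw [hf, chainrule, hgder0, hgder1]
    rw [Polynomial.eval_add, Polynomial.eval_mul, Polynomial.eval_mul,
      Polynomial.eval_C, Polynomial.eval_C, hg]
    rw [evalcomp', evalcomp']
  -- the three parameter values
  have key : ∀ q ∈ ({p1, p2, p3} : Set (ℝ × ℝ)),
      f.eval (τ q) = 0 ∧ f.derivative.eval (τ q) = 0 ∧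
        q = (p1.1 + (-bL) * τ q, p1.2 + aL * τ q) := by
    intro q hq
    obtain ⟨hqL, hqU⟩ := hp q hq
    have hq' := hparam q hqL
    obtain ⟨hv0, hv1, hv2⟩ := hvan q hqU
    refine ⟨?_, ?_, hq'⟩
    · rw [hfeval, ← hq', hv0]
    · rw [hder, ← hq', hv1, hv2]; ring
  have hroot1 := key p1 (by simp)
  have hroot2 := key p2 (by simp)
  have hroot3 := key p3 (by simp)
  -- distinct parameters
  have hne : ∀ q q' : ℝ × ℝ, q = (p1.1 + (-bL) * τ q, p1.2 + aL * τ q) →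
      q' = (p1.1 + (-bL) * τ q', p1.2 + aL * τ q') → q ≠ q' → τ q ≠ τ q' := by
    intro q q' h h' hqq' he
    apply hqq'
    rw [h, h', he]
  have h12' := hne p1 p2 hroot1.2.2 hroot2.2.2 h12
  have h13' := hne p1 p3 hroot1.2.2 hroot3.2.2 h13
  have h23' := hne p2 p3 hroot2.2.2 hroot3.2.2 h23
  -- f = 0
  have hf0 : f = 0 := by
    by_contra hf0
    have hm : ∀ q ∈ ({p1, p2, p3} : Set (ℝ × ℝ)), 1 < f.rootMultiplicity (τ q) := by
      intro q hq
      rw [Polynomial.one_lt_rootMultiplicity_iff_isRoot hf0]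
      exact ⟨(key q hq).1, (key q hq).2.1⟩
    have hle : ({τ p1, τ p1, τ p2, τ p2, τ p3, τ p3} : Multiset ℝ) ≤ f.roots := by
      rw [Multiset.le_iff_count]
      intro x
      rw [Polynomial.count_roots]
      by_cases hx1 : x = τ p1
      · subst hx1
        have : Multiset.count (τ p1) ({τ p1, τ p1, τ p2, τ p2, τ p3, τ p3} : Multiset ℝ)
            = 2 := by
          simp [Multiset.count_cons, h12', h13']
        rw [this]
        exact hm p1 (by simp)
      by_cases hx2 : x = τ p2
      · subst hx2
        have : Multiset.count (τ p2) ({τ p1, τ p1, τ p2, τ p2, τ p3, τ p3} : Multiset ℝ)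
            = 2 := by
          simp [Multiset.count_cons, (h12').symm, h23']
        rw [this]
        exact hm p2 (by simp)
      by_cases hx3 : x = τ p3
      · subst hx3
        have : Multiset.count (τ p3) ({τ p1, τ p1, τ p2, τ p2, τ p3, τ p3} : Multiset ℝ)
            = 2 := by
          simp [Multiset.count_cons, (h13').symm, (h23').symm]
        rw [this]
        exact hm p3 (by simp)
      · have : Multiset.count x ({τ p1, τ p1, τ p2, τ p2, τ p3, τ p3} : Multiset ℝ)
            = 0 := by
          simp [Multiset.count_cons, hx1, hx2, hx3]
        rw [this]
        exact Nat.zero_le _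
    have hcard : (6 : ℕ) ≤ Multiset.card f.roots := by
      have := Multiset.card_le_card hle
      simpa using this
    have := f.card_roots'
    omega
  intro p hpL
  have hp' := hparam p hpL
  have : evP φ p = f.eval (τ p) := by rw [hfeval, ← hp']
  rw [this, hf0, Polynomial.eval_zero]
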